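/- Let R be a non-noetherian archimedean valuation ring that is an IF-ring, and let E be a nonzero fp-injective R-module. Then E contains a faithful uniserial pure submodule U. Moreover, if there exists y in E with (0 : y) = 0 then U can be chosen to be Ry; otherwise U is necessarily not finitely generated. -/

import Mathlib

open IsLocalRing

universe u

/-- A chain (valuation) ring: ideals are totally ordered by inclusion. -/
def IsChainRing (R : Type u) [CommRing R] : Prop := ∀ I J : Ideal R, I ≤ J ∨ J ≤ I

/-- Archimedean: the maximal ideal is the only nonzero prime ideal. -/
def IsArchimedeanLocal (R : Type u) [CommRing R] [IsLocalRing R] : Prop :=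
  ∀ Q : Ideal R, Q.IsPrime → Q ≠ ⊥ → Q = maximalIdeal R

/-- The annihilator ideal `(0 : x)` of a module element. -/
def annOf (R : Type u) {M : Type u} [CommRing R] [AddCommGroup M] [Module R M] (x : M) :
    Ideal R := LinearMap.ker (LinearMap.toSpanSingleton R M x)

/-- fp-injective (absolutely pure): every homomorphism from a finitely generated
submodule of a finite free module extends; equivalently `Ext¹(F, M) = 0` for every
finitely presented `F`. -/
def IsFpInjective (R M : Type u) [CommRing R] [AddCommGroup M] [Module R M] : Prop :=
  ∀ (n : ℕ) (K : Submodule R (Fin n → R)), K.FG →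
    ∀ g : K →ₗ[R] M, ∃ h : (Fin n → R) →ₗ[R] M, ∀ x : K, h x = g x

/-- A coherent ring: every finitely generated ideal is finitely presented. -/
def IsCoherentRing (R : Type u) [CommRing R] : Prop :=
  ∀ I : Ideal R, I.FG → Module.FinitePresentation R ↥I

/-- An IF-ring: coherent and self fp-injective. -/
def IsIFRing (R : Type u) [CommRing R] : Prop := IsCoherentRing R ∧ IsFpInjective R R

/-- Purity of a submodule: `I·M ⊓ X = I·X` for every finitely generated ideal `I`. -/
def IsPureSubmodule {R M : Type u} [CommRing R] [AddCommGroup M] [Module R M]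
    (X : Submodule R M) : Prop :=
  ∀ I : Ideal R, I.FG → (I • (⊤ : Submodule R M)) ⊓ X = I • X

/-- A submodule is uniserial if its submodules are totally ordered by inclusion. -/
def IsUniserialSub {R M : Type u} [CommRing R] [AddCommGroup M] [Module R M]
    (U : Submodule R M) : Prop :=
  ∀ V W : Submodule R M, V ≤ U → W ≤ U → V ≤ W ∨ W ≤ V

/-- A uniserial module: submodules are totally ordered by inclusion. -/
def IsUniserialMod (R M : Type u) [CommRing R] [AddCommGroup M] [Module R M] : Prop :=
  ∀ V W : Submodule R M, V ≤ W ∨ W ≤ V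

/-- A faithful submodule: only `0` annihilates all its elements. -/
def IsFaithfulSub {R M : Type u} [CommRing R] [AddCommGroup M] [Module R M]
    (U : Submodule R M) : Prop := ∀ r : R, (∀ x ∈ U, r • x = 0) → r = 0

/-- A faithful module: its annihilator is zero. -/
def IsFaithfulMod (R M : Type u) [CommRing R] [AddCommGroup M] [Module R M] : Prop :=
  ∀ r : R, (∀ x : M, r • x = 0) → r = 0

/-- `μ(M)`: the minimal number of generators of a module. -/
noncomputable def mu (R M : Type u) [CommRing R] [AddCommGroup M] [Module R M] : ℕ :=
  sInf {n : ℕ | ∃ s : Finset M, s.card = n ∧ Submodule.span R (s : Set M) = ⊤}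

/-- A maximal ring: every family of cosets of ideals with the finite intersection
property has nonempty total intersection. -/
def IsMaximalRing (R : Type u) [CommRing R] : Prop :=
  ∀ (ι : Type u) (a : ι → R) (A : ι → Ideal R),
    (∀ s : Finset ι, ∃ x : R, ∀ i ∈ s, x - a i ∈ A i) → ∃ x : R, ∀ i, x - a i ∈ A i

/-- Almost maximal: `R/A` is maximal for every nonzero ideal `A`. -/
def IsAlmostMaximalRing (R : Type u) [CommRing R] : Prop :=
  ∀ A : Ideal R, A ≠ ⊥ → IsMaximalRing (R ⧸ A)

/-- A uniform module: any two nonzero submodules intersect nontrivially. -/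
def IsUniformMod (R M : Type u) [CommRing R] [AddCommGroup M] [Module R M] : Prop :=
  ∀ N₁ N₂ : Submodule R M, N₁ ≠ ⊥ → N₂ ≠ ⊥ → N₁ ⊓ N₂ ≠ ⊥

/-- Bounded module type with bound `n`: every finitely generated module is a direct
sum of submodules each generated by at most `n` elements. -/
def HasBoundedModuleType (R : Type u) [CommRing R] (n : ℕ) : Prop :=
  ∀ (M : Type u) [AddCommGroup M] [Module R M], Module.Finite R M →
    ∃ (ι : Type u) (N : ι → Submodule R M),
      iSupIndep N ∧ (⨆ i, N i) = ⊤ ∧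
      ∀ i, ∃ s : Finset M, s.card ≤ n ∧ Submodule.span R (s : Set M) = N i

/-!
Over a valuation ring, finitely generated ideals are principal; coherence makes every
annihilator `(0 : a)` principal, and self fp-injectivity gives `Ra = (0 : (0 : a))`.

If `(0 : y) = 0`, then `Ry ≅ R`, and purity of `Ry` is exactly this double-annihilator property.

Otherwise no nonzero `x ∈ E` has a principal annihilator (dividing `x` by a generator of
`(0 : g)`, where `(0 : x) = Rg`, would produce an element with zero annihilator). Since `R` is
archimedean, `⋂ₖ Rbᵏ = 0` for every nonunit `b`; since it is not noetherian, its maximal ideal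
is not principal, which yields nonzero nonunits `b₀, b₁, …` with `b_{k+1}² ∣ b_k`, so that no
nonunit divides all `b_k` for large `k`. Fp-injectivity of `E` lets us divide: from any
`x₀ ≠ 0` we get `x_{m+1}` and `a_m` with `a_m x_{m+1} = x_m` and `a_m b_m (0 : x_m) = 0`. The
union `U` of the chain `Rx₀ ⊆ Rx₁ ⊆ ⋯` is uniserial. Every relation `u x_n = 0` becomes
`u c = 0` once `x_n = c x_m` with `m` large, which gives purity. Faithfulness follows in the same
way, and a finitely generated `U` would lie in some `Rx_m`, forcing `(0 : x_m) = 0`.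
-/

open Pointwise Submodule

section Annihilator

variable {R M : Type u} [CommRing R] [AddCommGroup M] [Module R M]

theorem mem_annOf {x : M} {r : R} : r ∈ annOf R x ↔ r • x = 0 := by
  simp [annOf]

theorem IsFaithfulSub.annOf_eq_bot {U : Submodule R M} (hU : IsFaithfulSub U) {y : M}
    (hUy : U ≤ span R {y}) : annOf R y = ⊥ := by
  refine eq_bot_iff.mpr fun r hr => hU r fun z hz => ?_
  obtain ⟨c, rfl⟩ := mem_span_singleton.mp (hUy hz)
  rw [smul_comm, mem_annOf.mp hr, smul_zero]

end Annihilator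

section ChainRing

variable {R : Type u} [CommRing R] [PreValuationRing R]

theorem PreValuationRing.dvd_of_not_dvd {a b : R} (h : ¬a ∣ b) : b ∣ a :=
  (ValuationRing.dvd_total a b).resolve_left h

instance : IsBezout R := by
  refine IsBezout.iff_span_pair_isPrincipal.mpr fun x y => ?_
  rw [Ideal.span_insert]
  rcases ValuationRing.dvd_total x y with h | h
  · rw [sup_eq_left.mpr (Ideal.span_singleton_le_span_singleton.mpr h)]
    exact ⟨x, rfl⟩
  · rw [sup_eq_right.mpr (Ideal.span_singleton_le_span_singleton.mpr h)]
    exact ⟨y, rfl⟩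

end ChainRing

section Archimedean

variable {R : Type u} [CommRing R] [IsLocalRing R]

theorem pow_eq_zero_of_pow_succ_dvd {b : R} (hb : b ∈ maximalIdeal R) {k : ℕ}
    (h : b ^ (k + 1) ∣ b ^ k) : b ^ k = 0 := by
  obtain ⟨z, hz⟩ := h
  have hunit : IsUnit (1 - b * z) :=
    isUnit_one_sub_self_of_mem_nonunits _ (Ideal.mul_mem_right z _ hb)
  refine hunit.mul_left_eq_zero.mp ?_
  linear_combination hz

variable [PreValuationRing R]

open PreValuationRing

theorem iInf_span_pow_eq_bot (harch : IsArchimedeanLocal R) {b : R}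
    (hb : b ∈ maximalIdeal R) : ⨅ k : ℕ, Ideal.span {b ^ k} = ⊥ := by
  set P := ⨅ k : ℕ, Ideal.span {b ^ k}
  have mem_P : ∀ {x}, x ∈ P ↔ ∀ k, b ^ k ∣ x := by
    simp [P, Submodule.mem_iInf, Ideal.mem_span_singleton]
  have eq_bot_of_dvd : ∀ k, b ^ (k + 1) ∣ b ^ k → P = ⊥ := fun k h =>
    eq_bot_iff.mpr fun x hx => by
      simpa [pow_eq_zero_of_pow_succ_dvd hb h] using mem_P.mp hx k
  by_contra hP
  have hprime : P.IsPrime := by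
    refine ⟨fun htop => ?_, fun {x y} hxy => ?_⟩
    · have hb1 : b ^ 1 ∣ 1 := mem_P.mp (htop ▸ Submodule.mem_top) 1
      exact (mem_maximalIdeal b).mp hb (isUnit_of_dvd_one (by simpa using hb1))
    · by_contra! h
      obtain ⟨j, hj⟩ := not_forall.mp (mt mem_P.mpr h.1)
      obtain ⟨l, hl⟩ := not_forall.mp (mt mem_P.mpr h.2)
      have hxy' : x * y ∣ b ^ (j + l) :=
        pow_add b j l ▸ mul_dvd_mul (dvd_of_not_dvd hj) (dvd_of_not_dvd hl)
      exact hP (eq_bot_of_dvd _ ((mem_P.mp hxy _).trans hxy'))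
  have hbP : b ∈ P := harch P hprime hP ▸ hb
  exact hP (eq_bot_of_dvd 1 (by simpa using mem_P.mp hbP 2))

theorem exists_not_pow_dvd (harch : IsArchimedeanLocal R) {b : R} (hb : b ∈ maximalIdeal R)
    {a : R} (ha : a ≠ 0) : ∃ k, ¬b ^ k ∣ a := by
  by_contra! h
  refine ha ((Submodule.mem_bot R).mp ?_)
  rw [← iInf_span_pow_eq_bot harch hb, Submodule.mem_iInf]
  exact fun k => Ideal.mem_span_singleton.mpr (h k)

theorem eq_bot_of_forall_eq_mul (harch : IsArchimedeanLocal R) {β : R}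
    (hβ : β ∈ maximalIdeal R) {I : Ideal R} (hI : ∀ t ∈ I, ∃ u ∈ I, t = β * u) : I = ⊥ := by
  have hpow : ∀ k, ∀ t ∈ I, β ^ k ∣ t := by
    intro k
    induction k with
    | zero => exact fun t _ => by simp
    | succ k ih =>
      intro t ht
      obtain ⟨u, hu, rfl⟩ := hI t ht
      rw [pow_succ']
      exact mul_dvd_mul_left β (ih u hu)
  refine eq_bot_iff.mpr fun t ht => (Submodule.mem_bot R).mpr ?_
  by_contra ht0
  obtain ⟨k, hk⟩ := exists_not_pow_dvd harch hβ ht0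
  exact hk (hpow k t ht)

end Archimedean

section NonNoetherian

variable {R : Type u} [CommRing R] [IsLocalRing R] [PreValuationRing R]

open PreValuationRing

theorem exists_associated_pow_of_maximalIdeal_eq_span (harch : IsArchimedeanLocal R) {c : R}
    (hc : maximalIdeal R = Ideal.span {c}) {x : R} (hx : x ≠ 0) : ∃ n, Associated (c ^ n) x := by
  classical
  have hcm : c ∈ maximalIdeal R := hc ▸ Ideal.mem_span_singleton_self c
  have hex := exists_not_pow_dvd harch hcm hx
  obtain ⟨k, hk⟩ : ∃ k, Nat.find hex = k + 1 :=
    Nat.exists_eq_succ_of_ne_zero fun h0 => by simpa [h0] using Nat.find_spec hex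
  obtain ⟨u, rfl⟩ : c ^ k ∣ x := not_not.mp (Nat.find_min hex (by omega))
  have hu : IsUnit u := by
    by_contra hu
    obtain ⟨v, rfl⟩ := Ideal.mem_span_singleton.mp (hc ▸ (mem_maximalIdeal u).mpr hu)
    exact hk ▸ Nat.find_spec hex <| ⟨v, by ring⟩
  exact ⟨k, hu.unit, rfl⟩

theorem isNoetherianRing_of_maximalIdeal_eq_span (harch : IsArchimedeanLocal R) {c : R}
    (hc : maximalIdeal R = Ideal.span {c}) : IsNoetherianRing R := by
  classical
  suffices IsPrincipalIdealRing R from inferInstance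
  refine ⟨fun I => ?_⟩
  by_cases hI : I = ⊥
  · exact hI ▸ bot_isPrincipal
  have hex : ∃ n, c ^ n ∈ I := by
    obtain ⟨x, hxI, hx0⟩ := Submodule.exists_mem_ne_zero_of_ne_bot hI
    obtain ⟨n, hn⟩ := exists_associated_pow_of_maximalIdeal_eq_span harch hc hx0
    exact ⟨n, I.mem_of_dvd hn.symm.dvd hxI⟩
  refine ⟨c ^ Nat.find hex, le_antisymm (fun y hy => ?_) ?_⟩
  · rw [Ideal.submodule_span_eq, Ideal.mem_span_singleton]
    rcases eq_or_ne y 0 with rfl | hy0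
    · exact dvd_zero _
    obtain ⟨m, hm⟩ := exists_associated_pow_of_maximalIdeal_eq_span harch hc hy0
    exact (pow_dvd_pow c (Nat.find_min' hex (I.mem_of_dvd hm.symm.dvd hy))).trans hm.dvd
  · exact (Submodule.span_singleton_le_iff_mem _ _).mpr (Nat.find_spec hex)

theorem exists_sq_dvd (harch : IsArchimedeanLocal R) (hnoeth : ¬IsNoetherianRing R) {b : R}
    (hb : b ∈ maximalIdeal R) (hb0 : b ≠ 0) : ∃ b' ∈ maximalIdeal R, b' ≠ 0 ∧ b' ^ 2 ∣ b := by
  obtain ⟨e, he, hbe⟩ : ∃ e ∈ maximalIdeal R, ¬b ∣ e := by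
    by_contra! h
    exact hnoeth (isNoetherianRing_of_maximalIdeal_eq_span harch
      (le_antisymm (fun e he => Ideal.mem_span_singleton.mpr (h e he))
        ((Ideal.span_singleton_le_iff_mem _).mpr hb)))
  obtain ⟨d, rfl⟩ := dvd_of_not_dvd hbe
  rcases ValuationRing.dvd_total e d with ⟨z, rfl⟩ | ⟨z, rfl⟩
  · exact ⟨e, he, left_ne_zero_of_mul hb0, ⟨z, by ring⟩⟩
  · exact ⟨d, (mem_maximalIdeal d).mpr fun hd => hbe (hd.mul_right_dvd.mpr dvd_rfl),
      right_ne_zero_of_mul hb0, ⟨z, by ring⟩⟩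

theorem exists_seq_sq_dvd (harch : IsArchimedeanLocal R) (hnoeth : ¬IsNoetherianRing R) :
    ∃ b : ℕ → R, (∀ k, b k ∈ maximalIdeal R ∧ b k ≠ 0) ∧ ∀ k, b (k + 1) ^ 2 ∣ b k := by
  let S := {z : R // z ∈ maximalIdeal R ∧ z ≠ 0}
  have hS : ∀ z : S, ∃ w : S, (w : R) ^ 2 ∣ z := fun ⟨z, hz, hz0⟩ => by
    obtain ⟨w, hw, hw0, hwz⟩ := exists_sq_dvd harch hnoeth hz hz0
    exact ⟨⟨w, hw, hw0⟩, hwz⟩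
  choose G hG using hS
  obtain ⟨b₀, hb₀, hb₀0⟩ : ∃ z ∈ maximalIdeal R, z ≠ 0 := by
    by_contra! h
    refine hnoeth (isNoetherianRing_of_maximalIdeal_eq_span harch (c := 0) ?_)
    rw [Ideal.span_singleton_eq_bot.mpr rfl, eq_bot_iff]
    exact fun z hz => (Submodule.mem_bot R).mpr (h z hz)
  refine ⟨fun k => (G^[k] ⟨b₀, hb₀, hb₀0⟩ : R), fun k => (G^[k] _).2, fun k => ?_⟩
  simpa only [Function.iterate_succ_apply'] using hG _

theorem exists_not_dvd_of_sq_dvd (harch : IsArchimedeanLocal R) {b : ℕ → R}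
    (hb : ∀ k, b (k + 1) ^ 2 ∣ b k) {n : ℕ} (hn : b n ≠ 0) {c : R} (hc : c ∈ maximalIdeal R) :
    ∃ k ≥ n, ¬c ∣ b k := by
  by_contra! h
  have hpow : ∀ i, b (n + i) ^ 2 ^ i ∣ b n := by
    intro i
    induction i with
    | zero => simp
    | succ i ih =>
      rw [pow_succ', pow_mul, ← add_assoc]
      exact (pow_dvd_pow_of_dvd (hb (n + i)) _).trans ih
  obtain ⟨K, hK⟩ := exists_not_pow_dvd harch hc hn
  exact hK ((pow_dvd_pow c K.lt_two_pow_self.le).trans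
    ((pow_dvd_pow_of_dvd (h (n + K) (Nat.le_add_right n K)) _).trans (hpow K)))

end NonNoetherian

section FpInjective

variable {R M : Type u} [CommRing R] [AddCommGroup M] [Module R M]

theorem IsFpInjective.exists_smul_eq (hM : IsFpInjective R M) {a : R} {x : M}
    (h : annOf R a ≤ annOf R x) : ∃ y : M, a • y = x := by
  let f := LinearMap.toSpanSingleton R (Fin 1 → R) (fun _ => a)
  have hker : LinearMap.ker f ≤ annOf R x := fun r hr =>
    h (mem_annOf.mpr (by simpa [f, funext_iff] using hr))
  obtain ⟨e, he⟩ := hM 1 (LinearMap.range f)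
    (by rw [LinearMap.range_toSpanSingleton]; exact fg_span_singleton _)
    ((LinearMap.ker f).liftQ _ hker ∘ₗ f.quotKerEquivRange.symm.toLinearMap)
  refine ⟨e fun _ => 1, ?_⟩
  have hf1 : a • (fun _ => 1 : Fin 1 → R) = f 1 := by ext; simp [f]
  rw [← map_smul, hf1, he ⟨f 1, LinearMap.mem_range_self f 1⟩]
  simp only [LinearMap.comp_apply, LinearEquiv.coe_coe,
    LinearMap.quotKerEquivRange_symm_apply_image, mkQ_apply]
  exact one_smul R x

theorem IsFpInjective.dvd_of_annOf_le (hR : IsFpInjective R R) {a s : R}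
    (h : annOf R a ≤ annOf R s) : a ∣ s := by
  obtain ⟨y, rfl⟩ := hR.exists_smul_eq h
  exact dvd_mul_right a y

theorem IsFpInjective.dvd_of_mul_eq_zero (hR : IsFpInjective R R) {t α r : R}
    (hα : annOf R t = Ideal.span {α}) (h : r * α = 0) : t ∣ r :=
  hR.dvd_of_annOf_le fun ρ hρ => by
    obtain ⟨σ, rfl⟩ := Ideal.mem_span_singleton.mp (hα ▸ hρ)
    rw [mem_annOf, smul_eq_mul]
    linear_combination σ * h

theorem IsCoherentRing.exists_annOf_eq_span [PreValuationRing R] (hR : IsCoherentRing R)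
    (a : R) : ∃ q, annOf R a = Ideal.span {q} := by
  let f := LinearMap.toSpanSingleton R R a
  have : Module.FinitePresentation R (LinearMap.range f) :=
    hR _ (by rw [LinearMap.range_toSpanSingleton]; exact fg_span_singleton a)
  obtain ⟨q, hq⟩ := IsBezout.isPrincipal_of_FG _
    (Module.FinitePresentation.fg_ker f.rangeRestrict f.surjective_rangeRestrict)
  rw [LinearMap.ker_rangeRestrict] at hq
  exact ⟨q, hq⟩

end FpInjective

section ChainOfCyclic

variable {R M : Type u} [CommRing R] [AddCommGroup M] [Module R M]

theorem isUniserialSub_of_forall_mem_span_singleton {U : Submodule R M}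
    (hU : ∀ v ∈ U, ∀ w ∈ U, v ∈ span R {w} ∨ w ∈ span R {v}) : IsUniserialSub U := by
  intro V W hV hW
  by_contra! h
  obtain ⟨v, hvV, hvW⟩ := SetLike.not_le_iff_exists.mp h.1
  obtain ⟨w, hwW, hwV⟩ := SetLike.not_le_iff_exists.mp h.2
  rcases hU v (hV hvV) w (hW hwW) with hvw | hwv
  · exact hvW ((span_singleton_le_iff_mem _ _).mpr hwW hvw)
  · exact hwV ((span_singleton_le_iff_mem _ _).mpr hvV hwv)

theorem mem_iSup_span_singleton_of_monotone {x : ℕ → M} (hx : Monotone fun m => span R {x m})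
    {z : M} : z ∈ ⨆ m, span R {x m} ↔ ∃ m, z ∈ span R {x m} :=
  mem_iSup_of_directed _ hx.directed_le

theorem monotone_span_singleton_of_smul_eq {x : ℕ → M} {a : ℕ → R}
    (hx : ∀ m, a m • x (m + 1) = x m) : Monotone fun m => span R {x m} :=
  monotone_nat_of_le_succ fun m =>
    (span_singleton_le_iff_mem _ _).mpr (mem_span_singleton.mpr ⟨a m, hx m⟩)

theorem exists_le_span_singleton_of_fg {x : ℕ → M} (hx : Monotone fun m => span R {x m})
    (hfg : (⨆ m, span R {x m}).FG) : ∃ N, ⨆ m, span R {x m} ≤ span R {x N} := by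
  obtain ⟨s, hs⟩ := CompleteLattice.IsCompactElement.exists_finset_of_le_iSup _
    ((fg_iff_compact _).mp hfg) _ le_rfl
  exact ⟨s.sup id, hs.trans (iSup₂_le fun m hm => hx (Finset.le_sup (f := id) hm))⟩

variable [PreValuationRing R]

theorem mem_span_singleton_or_mem_span_singleton {z v w : M} (hv : v ∈ span R {z})
    (hw : w ∈ span R {z}) : v ∈ span R {w} ∨ w ∈ span R {v} := by
  obtain ⟨r, rfl⟩ := mem_span_singleton.mp hv
  obtain ⟨s, rfl⟩ := mem_span_singleton.mp hw
  rcases ValuationRing.dvd_total r s with ⟨c, rfl⟩ | ⟨c, rfl⟩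
  · exact Or.inr (mem_span_singleton.mpr ⟨c, by rw [smul_smul, mul_comm]⟩)
  · exact Or.inl (mem_span_singleton.mpr ⟨c, by rw [smul_smul, mul_comm]⟩)

theorem isUniserialSub_iSup_span_singleton {x : ℕ → M}
    (hx : Monotone fun m => span R {x m}) : IsUniserialSub (⨆ m, span R {x m}) := by
  refine isUniserialSub_of_forall_mem_span_singleton fun v hv w hw => ?_
  obtain ⟨i, hi⟩ := (mem_iSup_span_singleton_of_monotone hx).mp hv
  obtain ⟨j, hj⟩ := (mem_iSup_span_singleton_of_monotone hx).mp hw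
  exact mem_span_singleton_or_mem_span_singleton (hx (le_max_left i j) hi)
    (hx (le_max_right i j) hj)

theorem isPureSubmodule_of_forall_mem_smul {U : Submodule R M}
    (hU : ∀ (a : R) (e : M), a • e ∈ U → a • e ∈ a • U) : IsPureSubmodule U := by
  intro I hI
  refine le_antisymm ?_ (le_inf (smul_mono_right _ le_top) smul_le_right)
  obtain ⟨a, rfl⟩ := IsBezout.isPrincipal_of_FG I hI
  rw [Ideal.submodule_span_eq, ideal_span_singleton_smul, ideal_span_singleton_smul]
  rintro _ ⟨he, hU'⟩
  obtain ⟨e, -, rfl⟩ := mem_smul_pointwise_iff_exists _ _ _ |>.mp he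
  exact hU a e hU'

theorem isPureSubmodule_iSup_span_singleton (hcoh : IsCoherentRing R) (hR : IsFpInjective R R)
    {x : ℕ → M} (hx : Monotone fun m => span R {x m})
    (hrel : ∀ n (u : R), u • x n = 0 → ∃ (m : ℕ) (c : R), c • x m = x n ∧ u * c = 0) :
    IsPureSubmodule (⨆ m, span R {x m}) := by
  refine isPureSubmodule_of_forall_mem_smul fun a e hae => ?_
  obtain ⟨n, hn⟩ := (mem_iSup_span_singleton_of_monotone hx).mp hae
  obtain ⟨s, hs⟩ := mem_span_singleton.mp hn
  obtain ⟨q, hq⟩ := hcoh.exists_annOf_eq_span a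
  have hqa : q * a = 0 := mem_annOf.mp (hq ▸ Ideal.mem_span_singleton_self q)
  obtain ⟨m, c, hc, hsc⟩ := hrel n (q * s) (by rw [mul_smul, hs, smul_smul, hqa, zero_smul])
  obtain ⟨r, hr⟩ := hR.dvd_of_mul_eq_zero hq (by linear_combination hsc : s * c * q = 0)
  refine mem_smul_pointwise_iff_exists _ _ _ |>.mpr ⟨r • x m, ?_, ?_⟩
  · exact mem_iSup_of_mem m (smul_mem _ r (mem_span_singleton_self _))
  · rw [smul_smul, ← hr, mul_smul, hc, hs]

end ChainOfCyclic

section FpInjectiveModule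

variable {R E : Type u} [CommRing R] [PreValuationRing R] [AddCommGroup E] [Module R E]

open PreValuationRing

theorem exists_annOf_eq_bot_of_annOf_eq_span (hcoh : IsCoherentRing R)
    (hR : IsFpInjective R R) (hE : IsFpInjective R E) {x : E} (hx : x ≠ 0) {g : R}
    (hg : annOf R x = Ideal.span {g}) : ∃ y : E, annOf R y = ⊥ := by
  obtain ⟨q, hq⟩ := hcoh.exists_annOf_eq_span g
  have hqg : q * g = 0 := mem_annOf.mp (hq ▸ Ideal.mem_span_singleton_self q)
  have hgx : g • x = 0 := mem_annOf.mp (hg ▸ Ideal.mem_span_singleton_self g)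
  obtain ⟨y, rfl⟩ := hE.exists_smul_eq (a := q) (x := x) fun r hr => by
    obtain ⟨σ, rfl⟩ := hR.dvd_of_mul_eq_zero hq (mem_annOf.mp hr)
    rw [mem_annOf, mul_comm, mul_smul, hgx, smul_zero]
  refine ⟨y, eq_bot_iff.mpr fun r hr => ?_⟩
  rw [mem_annOf] at hr
  obtain ⟨σ, rfl⟩ := dvd_of_not_dvd (a := r) (b := q) fun ⟨ρ, hρ⟩ =>
    hx (by rw [hρ, mul_comm, mul_smul, hr, smul_zero])
  obtain ⟨τ, rfl⟩ := Ideal.mem_span_singleton.mp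
    (hg ▸ mem_annOf.mpr (by rwa [smul_smul, mul_comm]) : σ ∈ Ideal.span {g})
  exact (Submodule.mem_bot R).mpr (by linear_combination τ * hqg)

variable [IsLocalRing R]

theorem exists_smul_eq_and_mul_annOf_eq_zero (harch : IsArchimedeanLocal R)
    (hcoh : IsCoherentRing R) (hR : IsFpInjective R R) (hE : IsFpInjective R E) {β : R}
    (hβ : β ∈ maximalIdeal R) (x : E) :
    ∃ (α : R) (y : E), α • y = x ∧ ∀ u : R, u • x = 0 → α * β * u = 0 := by
  obtain ⟨t, htx, ht⟩ : ∃ t : R, t • x = 0 ∧ ∀ u : R, u • x = 0 → t ∣ β * u := by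
    by_contra! h
    have hbot := eq_bot_of_forall_eq_mul harch hβ (I := annOf R x) fun t ht => by
      obtain ⟨u, hu, hnd⟩ := h t (mem_annOf.mp ht)
      obtain ⟨σ, rfl⟩ := dvd_of_not_dvd hnd
      exact ⟨u * σ, mem_annOf.mpr (by rw [mul_comm, mul_smul, hu, smul_zero]), by ring⟩
    obtain ⟨u, hu, hnd⟩ := h 0 (zero_smul R x)
    obtain rfl : u = 0 := (Submodule.mem_bot R).mp (hbot ▸ mem_annOf.mpr hu)
    exact hnd (by simp)
  obtain ⟨α, hα⟩ := hcoh.exists_annOf_eq_span t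
  have hαt : α * t = 0 := mem_annOf.mp (hα ▸ Ideal.mem_span_singleton_self α)
  obtain ⟨y, hy⟩ := hE.exists_smul_eq (a := α) (x := x) fun r hr => by
    obtain ⟨σ, rfl⟩ := hR.dvd_of_mul_eq_zero hα (mem_annOf.mp hr)
    rw [mem_annOf, mul_comm, mul_smul, htx, smul_zero]
  refine ⟨α, y, hy, fun u hu => ?_⟩
  obtain ⟨σ, hσ⟩ := ht u hu
  rw [mul_assoc, hσ, ← mul_assoc, hαt, zero_mul]

theorem exists_seq_smul_eq (harch : IsArchimedeanLocal R) (hcoh : IsCoherentRing R)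
    (hR : IsFpInjective R R) (hE : IsFpInjective R E) {b : ℕ → R}
    (hb : ∀ k, b k ∈ maximalIdeal R) (x₀ : E) :
    ∃ (x : ℕ → E) (a : ℕ → R), x 0 = x₀ ∧
      ∀ m, a m • x (m + 1) = x m ∧ ∀ u : R, u • x m = 0 → a m * b m * u = 0 := by
  choose α y hy hα using fun (z : E) (k : ℕ) =>
    exists_smul_eq_and_mul_annOf_eq_zero harch hcoh hR hE (hb k) z
  let x : ℕ → E := fun m => Nat.rec x₀ (fun k z => y z k) m
  exact ⟨x, fun m => α (x m) m, rfl, fun m => ⟨hy _ _, hα _ _⟩⟩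

theorem exists_smul_eq_mul_eq_zero_of_smul_eq_zero (harch : IsArchimedeanLocal R)
    (hcoh : IsCoherentRing R) (hR : IsFpInjective R R) (hE : IsFpInjective R E)
    (hE_ann : ∀ y : E, annOf R y ≠ ⊥) {b : ℕ → R} (hb : ∀ k, b (k + 1) ^ 2 ∣ b k)
    {x : ℕ → E} {a : ℕ → R} (hx : ∀ m, a m • x (m + 1) = x m)
    (hx_ann : ∀ m (u : R), u • x m = 0 → a m * b m * u = 0) {n : ℕ} (hbn : b n ≠ 0)
    (hxn : x n ≠ 0) {u : R} (hu : u • x n = 0) :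
    ∃ (m : ℕ) (c : R), c • x m = x n ∧ u * c = 0 := by
  -- `(0 : x n)` is not principal, so `u = w h` with `w x n = 0` and `h` a nonunit; `h` fails to
  -- divide some `b k`, and then `u` dies after multiplying by the coefficient of `x n` in `x (k+1)`.
  obtain ⟨w, hw, hwu⟩ : ∃ w ∈ annOf R (x n), ¬u ∣ w := by
    by_contra! h
    obtain ⟨y, hy⟩ := exists_annOf_eq_bot_of_annOf_eq_span hcoh hR hE hxn
      (le_antisymm (fun w hw => Ideal.mem_span_singleton.mpr (h w hw))
        ((Ideal.span_singleton_le_iff_mem _).mpr (mem_annOf.mpr hu)))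
    exact hE_ann y hy
  obtain ⟨h, rfl⟩ := dvd_of_not_dvd hwu
  have hh : h ∈ maximalIdeal R := (mem_maximalIdeal h).mpr fun hh =>
    hwu (hh.mul_right_dvd.mpr dvd_rfl)
  obtain ⟨k, hnk, hk⟩ := exists_not_dvd_of_sq_dvd harch hb hbn hh
  obtain ⟨h', rfl⟩ := dvd_of_not_dvd hk
  obtain ⟨c, hc⟩ := mem_span_singleton.mp
    (monotone_span_singleton_of_smul_eq hx hnk (mem_span_singleton_self (x n)))
  have hwc := hx_ann k (w * c) (by rw [mul_smul, hc, mem_annOf.mp hw])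
  exact ⟨k + 1, c * a k, by rw [mul_smul, hx, hc], by linear_combination h' * hwc⟩

theorem eq_zero_of_forall_smul_eq_zero (harch : IsArchimedeanLocal R) (hcoh : IsCoherentRing R)
    {b : ℕ → R} (hb : ∀ k, b (k + 1) ^ 2 ∣ b k) (hb0 : b 0 ≠ 0) {x : ℕ → E} {a : ℕ → R}
    (hx : ∀ m, a m • x (m + 1) = x m) (hx_ann : ∀ m (u : R), u • x m = 0 → a m * b m * u = 0)
    (hx0 : ∀ m, x m ≠ 0) {r : R} (hr : ∀ m, r • x m = 0) : r = 0 := by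
  by_contra hr0
  have hbr : ∀ m, b m * r = 0 := fun m => by
    obtain ⟨i, rfl⟩ := dvd_of_not_dvd (a := r) (b := a m) fun ⟨ρ, hρ⟩ =>
      hx0 m (by rw [← hx m, hρ, mul_comm, mul_smul, hr, smul_zero])
    have := hx_ann m i (by rw [← hx m, smul_smul, mul_comm, hr])
    linear_combination this
  obtain ⟨q, hq⟩ := hcoh.exists_annOf_eq_span r
  have hqm : q ∈ maximalIdeal R := (mem_maximalIdeal q).mpr fun hu => hr0 <| by
    have h1 : (1 : R) ∈ annOf R r := by rw [hq, Ideal.span_singleton_eq_top.mpr hu]; trivial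
    simpa using mem_annOf.mp h1
  obtain ⟨k, -, hk⟩ := exists_not_dvd_of_sq_dvd harch hb hb0 hqm
  exact hk (Ideal.mem_span_singleton.mp (hq ▸ mem_annOf.mpr (hbr k)))

end FpInjectiveModule

section Main

variable {R E : Type u} [CommRing R] [IsLocalRing R] [PreValuationRing R]
  [AddCommGroup E] [Module R E]

theorem span_singleton_faithful_uniserial_pure (hcoh : IsCoherentRing R) (hR : IsFpInjective R R)
    {y : E} (hy : annOf R y = ⊥) :
    span R {y} ≠ ⊥ ∧ IsUniserialSub (span R {y}) ∧ IsPureSubmodule (span R {y}) ∧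
      IsFaithfulSub (span R {y}) := by
  have hy' : ∀ r : R, r • y = 0 → r = 0 := fun r hr =>
    (Submodule.mem_bot R).mp (hy ▸ mem_annOf.mpr hr)
  have hmono : Monotone fun _ : ℕ => span R {y} := monotone_const
  have hy0 : y ≠ 0 := fun h => one_ne_zero (hy' 1 (by rw [h, smul_zero]))
  refine ⟨span_singleton_eq_bot.not.mpr hy0, ?_, ?_,
    fun r hr => hy' r (hr y (mem_span_singleton_self y))⟩
  · simpa using isUniserialSub_iSup_span_singleton hmono
  · simpa using isPureSubmodule_iSup_span_singleton hcoh hR hmono fun n u hu =>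
      ⟨n, 1, one_smul R y, by rw [hy' u hu, zero_mul]⟩

theorem exists_faithful_uniserial_pure_not_fg (harch : IsArchimedeanLocal R)
    (hnoeth : ¬IsNoetherianRing R) (hcoh : IsCoherentRing R) (hR : IsFpInjective R R)
    [Nontrivial E] (hE : IsFpInjective R E) (hE_ann : ∀ y : E, annOf R y ≠ ⊥) :
    ∃ U : Submodule R E, U ≠ ⊥ ∧ IsUniserialSub U ∧ IsPureSubmodule U ∧ IsFaithfulSub U ∧
      ¬U.FG := by
  obtain ⟨b, hb, hb2⟩ := exists_seq_sq_dvd harch hnoeth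
  obtain ⟨x₀, hx₀⟩ := exists_ne (0 : E)
  obtain ⟨x, a, rfl, hx⟩ := exists_seq_smul_eq harch hcoh hR hE (fun k => (hb k).1) x₀
  choose hx hx_ann using hx
  have hmono := monotone_span_singleton_of_smul_eq hx
  have hx0 : ∀ m, x m ≠ 0 := fun m h0 => hx₀ <| by
    obtain ⟨c, hc⟩ := mem_span_singleton.mp (hmono (Nat.zero_le m) (mem_span_singleton_self _))
    rw [← hc, h0, smul_zero]
  have hmem : ∀ m, x m ∈ ⨆ m, span R {x m} := fun m =>
    mem_iSup_of_mem m (mem_span_singleton_self _)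
  have hfaith : IsFaithfulSub (⨆ m, span R {x m}) := fun r hr =>
    eq_zero_of_forall_smul_eq_zero harch hcoh hb2 (hb 0).2 hx hx_ann hx0 fun m => hr _ (hmem m)
  refine ⟨⨆ m, span R {x m}, fun h => hx0 0 ((Submodule.mem_bot R).mp (h ▸ hmem 0)),
    isUniserialSub_iSup_span_singleton hmono,
    isPureSubmodule_iSup_span_singleton hcoh hR hmono fun n u hu =>
      exists_smul_eq_mul_eq_zero_of_smul_eq_zero harch hcoh hR hE hE_ann hb2 hx hx_ann
        (hb n).2 (hx0 n) hu,
    hfaith, fun hfg => ?_⟩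
  obtain ⟨N, hN⟩ := exists_le_span_singleton_of_fg hmono hfg
  exact hE_ann (x N) (hfaith.annOf_eq_bot hN)

end Main

theorem stmt6 (R : Type u) [CommRing R] [IsLocalRing R]
    (hchain : IsChainRing R) (harch : IsArchimedeanLocal R)
    (hnoeth : ¬ IsNoetherianRing R) (hIF : IsIFRing R)
    (E : Type u) [AddCommGroup E] [Module R E] [Nontrivial E]
    (hE : IsFpInjective R E) :
    (∃ U : Submodule R E, U ≠ ⊥ ∧ IsUniserialSub U ∧ IsPureSubmodule U ∧
        IsFaithfulSub U) ∧
    (∀ y : E, annOf R y = ⊥ →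
      ((Submodule.span R {y} : Submodule R E) ≠ ⊥ ∧
        IsUniserialSub (Submodule.span R {y} : Submodule R E) ∧
        IsPureSubmodule (Submodule.span R {y} : Submodule R E) ∧
        IsFaithfulSub (Submodule.span R {y} : Submodule R E))) ∧
    ((∀ y : E, annOf R y ≠ ⊥) →
      ∃ U : Submodule R E, U ≠ ⊥ ∧ IsUniserialSub U ∧ IsPureSubmodule U ∧
        IsFaithfulSub U ∧ ¬ U.FG) := by
  obtain ⟨hcoh, hR⟩ := hIF
  have : PreValuationRing R := PreValuationRing.iff_ideal_total.mpr ⟨hchain⟩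
  have cyclic := fun (y : E) (hy : annOf R y = ⊥) =>
    span_singleton_faithful_uniserial_pure hcoh hR hy
  have not_fg := exists_faithful_uniserial_pure_not_fg harch hnoeth hcoh hR hE
  refine ⟨?_, cyclic, not_fg⟩
  by_cases hE_ann : ∃ y : E, annOf R y = ⊥
  · obtain ⟨y, hy⟩ := hE_ann
    exact ⟨_, cyclic y hy⟩
  · obtain ⟨U, hU, hU', hU'', hU''', -⟩ := not_fg fun y hy => hE_ann ⟨y, hy⟩
    exact ⟨U, hU, hU', hU'', hU'''⟩
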